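/- arXiv:2605.00360 — 4 statements merged into one kernel-verified Lean document; each statement's English description precedes it below -/
import Mathlib

section
/- Fix 0 ≤ s ≤ T, x_s ∈ ℕ^d, and let h(t,x) = P_{T−t}f(x) for f bounded away from 0 and ∞. Define g(t,x) := 1_{x_s ≤ x} · (h(t,x)/h(s,x_s)) · π_{t−s}(x − x_s) for t ∈ [s,T]. Then g solves the Kolmogorov forward equation ∂_t g(t,x) = ∑_{i=1}^d [ (h(t,x)/h(t,x−eᵢ)) g(t,x−eᵢ) − (h(t,x+eᵢ)/h(t,x)) g(t,x) ], with initial condition g(s,·) = δ_{x_s}. -/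
/-!
Outside the cone `x ≥ x_s` the weight `π_{t-s}(x - x_s)` vanishes, so the indicator is redundant and
`g(t,x) = h(t,x) π_{t-s}(x - x_s) / h(s,x_s)` for all `x ∈ ℤ^d`. The Poisson weights solve the
forward equation `∂_u π_u(z) = ∑ᵢ (π_u(z - eᵢ) - π_u(z))`, and `h` solves the backward equation
`∂_t h(t,x) = ∑ᵢ (h(t,x) - h(t,x + eᵢ))`; the product rule turns these into the forward equation for
`g`, since `h > 0` lets the factors `h(t,x - eᵢ)` cancel. For the backward equation, `P_u f(x)` is
rewritten as a sum over all of `ℤ^d`, where `y ↦ y + eᵢ` is a bijection, and differentiated term by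
term under the domination `|π_u(y)| ≤ e^{2R} π_R(y)` for `|u| ≤ R`.
-/

noncomputable def poisson (t : ℝ) (k : ℕ) : ℝ := Real.exp (-t) * t ^ k / k.factorial

noncomputable def poissonD (d : ℕ) (t : ℝ) (x : Fin d → ℕ) : ℝ := ∏ i, poisson t (x i)

/-- Poisson pmf extended to ℤ by 0 on negative integers. -/
noncomputable def poissonZ (t : ℝ) (k : ℤ) : ℝ :=
  if 0 ≤ k then Real.exp (-t) * t ^ k.toNat / (k.toNat).factorial else 0

noncomputable def poissonZd (d : ℕ) (t : ℝ) (x : Fin d → ℤ) : ℝ :=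
  ∏ i, poissonZ t (x i)

/-- The Poisson semigroup acting at a point of ℤ^d:
    P_t f(x) = ∑_{y ∈ ℕ^d} f(x+y) π_t(y). -/
noncomputable def PZ (d : ℕ) (t : ℝ) (f : (Fin d → ℤ) → ℝ) (x : Fin d → ℤ) : ℝ :=
  ∑' y : Fin d → ℕ, f (x + fun i => (y i : ℤ)) * poissonD d t y

/-- Candidate transition probabilities of the Poisson–Föllmer process:
    g(t,x) = 1_{x_s ≤ x} (h(t,x)/h(s,x_s)) π_{t-s}(x - x_s)
    with h(t,x) = P_{T-t}f(x). -/
noncomputable def gFun (d : ℕ) (T s : ℝ) (f : (Fin d → ℤ) → ℝ)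
    (xs : Fin d → ℤ) (t : ℝ) (x : Fin d → ℤ) : ℝ :=
  (if ∀ i, xs i ≤ x i then (1 : ℝ) else 0)
    * (PZ d (T - t) f x / PZ d (T - s) f xs) * poissonZd d (t - s) (x - xs)

theorem summable_pi_prod_of_nonneg {ι κ : Type*} [Fintype ι] {g : ι → κ → ℝ}
    (hg0 : ∀ i k, 0 ≤ g i k) (hg : ∀ i, Summable (g i)) :
    Summable fun y : ι → κ => ∏ i, g i (y i) := by
  classical
  refine summable_of_sum_le (c := ∏ i, ∑' k, g i k)
    (fun y => Finset.prod_nonneg fun i _ => hg0 i _) fun u => ?_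
  calc ∑ y ∈ u, ∏ i, g i (y i)
      ≤ ∑ y ∈ Fintype.piFinset fun i => u.image (· i), ∏ i, g i (y i) :=
        Finset.sum_le_sum_of_subset_of_nonneg
          (fun y hy => Fintype.mem_piFinset.2 fun i => Finset.mem_image_of_mem _ hy)
          (fun y _ _ => Finset.prod_nonneg fun i _ => hg0 i _)
    _ = ∏ i, ∑ k ∈ u.image (· i), g i k := (Finset.prod_univ_sum _ _).symm
    _ ≤ ∏ i, ∑' k, g i k :=
        Finset.prod_le_prod (fun i _ => Finset.sum_nonneg fun k _ => hg0 i k)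
          fun i _ => (hg i).sum_le_tsum _ fun k _ => hg0 i k

lemma poissonZ_of_neg (t : ℝ) {k : ℤ} (hk : k < 0) : poissonZ t k = 0 := by
  simp [poissonZ, hk.not_ge]

lemma poissonZ_natCast (t : ℝ) (n : ℕ) :
    poissonZ t n = Real.exp (-t) * t ^ n / n.factorial := by
  simp [poissonZ]

lemma poissonZ_nonneg {t : ℝ} (ht : 0 ≤ t) (k : ℤ) : 0 ≤ poissonZ t k := by
  unfold poissonZ
  split_ifs <;> positivity

lemma poissonZ_zero_left (k : ℤ) : poissonZ 0 k = if k = 0 then 1 else 0 := by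
  rcases lt_or_ge k 0 with hk | hk
  · rw [poissonZ_of_neg _ hk, if_neg hk.ne]
  · lift k to ℕ using hk
    rw [poissonZ_natCast]
    cases k with
    | zero => simp
    | succ => simp; omega

lemma hasDerivAt_poissonZ (k : ℤ) (t : ℝ) :
    HasDerivAt (fun u => poissonZ u k) (poissonZ t (k - 1) - poissonZ t k) t := by
  rcases lt_or_ge k 0 with hk | hk
  · simp only [poissonZ_of_neg _ hk, poissonZ_of_neg _ (show k - 1 < 0 by omega), sub_zero]
    exact hasDerivAt_const t 0
  lift k to ℕ using hk
  simp only [poissonZ_natCast]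
  have hexp : HasDerivAt (fun u => Real.exp (-u)) (-Real.exp (-t)) t := by
    simpa using (hasDerivAt_neg t).exp
  have h : HasDerivAt (fun u => Real.exp (-u) * u ^ k / k.factorial)
      ((-Real.exp (-t) * t ^ k + Real.exp (-t) * (k * t ^ (k - 1))) / k.factorial) t :=
    (hexp.mul (hasDerivAt_pow k t)).div_const _
  refine h.congr_deriv ?_
  cases k with
  | zero => simp [poissonZ_of_neg]
  | succ n =>
    rw [show ((n + 1 : ℕ) : ℤ) - 1 = n by push_cast; ring, poissonZ_natCast, Nat.factorial_succ]
    push_cast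
    field_simp
    ring

lemma abs_poissonZ_le {u R : ℝ} (hu : |u| ≤ R) (k : ℤ) :
    |poissonZ u k| ≤ Real.exp (2 * R) * poissonZ R k := by
  rcases lt_or_ge k 0 with hk | hk
  · simp [poissonZ_of_neg _ hk]
  lift k to ℕ using hk
  rw [poissonZ_natCast, poissonZ_natCast, abs_div, abs_mul, abs_pow, Real.abs_exp, Nat.abs_cast]
  have hexp : Real.exp (-u) ≤ Real.exp (2 * R) * Real.exp (-R) := by
    rw [← Real.exp_add]
    exact Real.exp_le_exp.2 (by linarith [neg_abs_le u])
  calc Real.exp (-u) * |u| ^ k / k.factorial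
      ≤ Real.exp (2 * R) * Real.exp (-R) * R ^ k / k.factorial := by gcongr
    _ = Real.exp (2 * R) * (Real.exp (-R) * R ^ k / k.factorial) := by ring

lemma summable_poissonZ (t : ℝ) : Summable (poissonZ t) := by
  have hsupp : ∀ k ∉ Set.range ((↑) : ℕ → ℤ), poissonZ t k = 0 := fun k hk =>
    poissonZ_of_neg t (not_le.1 fun h => hk ⟨k.toNat, Int.toNat_of_nonneg h⟩)
  refine (Nat.cast_injective.summable_iff hsupp).1 ?_
  simpa [Function.comp_def, poissonZ_natCast, mul_div_assoc]
    using (Real.summable_pow_div_factorial t).mul_left (Real.exp (-t))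

section PoissonZd

variable {d : ℕ}

lemma poissonZd_eq_zero_of_neg (t : ℝ) {y : Fin d → ℤ} (hy : ∃ i, y i < 0) :
    poissonZd d t y = 0 :=
  let ⟨i, hi⟩ := hy
  Finset.prod_eq_zero (Finset.mem_univ i) (poissonZ_of_neg t hi)

lemma poissonZd_zero_left (y : Fin d → ℤ) : poissonZd d 0 y = if y = 0 then 1 else 0 := by
  simp only [poissonZd, poissonZ_zero_left, Finset.prod_boole, Finset.mem_univ, true_imp_iff,
    funext_iff, Pi.zero_apply]

lemma poissonZd_zero_right (t : ℝ) : poissonZd d t 0 = Real.exp (-t) ^ d := by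
  simp [poissonZd, poissonZ]

lemma poissonZd_nonneg {t : ℝ} (ht : 0 ≤ t) (y : Fin d → ℤ) : 0 ≤ poissonZd d t y :=
  Finset.prod_nonneg fun i _ => poissonZ_nonneg ht (y i)

lemma hasDerivAt_poissonZd (y : Fin d → ℤ) (t : ℝ) :
    HasDerivAt (fun u => poissonZd d u y)
      (∑ i, (poissonZd d t (y - Pi.single i 1) - poissonZd d t y)) t := by
  classical
  have h := HasDerivAt.finsetProd (u := Finset.univ) fun i _ => hasDerivAt_poissonZ (y i) t
  rw [Finset.prod_fn] at h
  refine h.congr_deriv ?_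
  refine Finset.sum_congr rfl fun i _ => ?_
  have hrest : ∏ j ∈ Finset.univ.erase i, poissonZ t ((y - Pi.single i 1 : Fin d → ℤ) j)
      = ∏ j ∈ Finset.univ.erase i, poissonZ t (y j) :=
    Finset.prod_congr rfl fun j hj => by simp [Finset.ne_of_mem_erase hj]
  rw [poissonZd, poissonZd, ← Finset.mul_prod_erase _ _ (Finset.mem_univ i),
    ← Finset.mul_prod_erase _ (fun j => poissonZ t (y j)) (Finset.mem_univ i), hrest]
  simp only [Pi.sub_apply, Pi.single_eq_same, smul_eq_mul]
  ring

lemma abs_poissonZd_le {u R : ℝ} (hu : |u| ≤ R) (y : Fin d → ℤ) :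
    |poissonZd d u y| ≤ Real.exp (2 * R) ^ d * poissonZd d R y := by
  rw [poissonZd, poissonZd, Finset.abs_prod, ← Fin.prod_const, ← Finset.prod_mul_distrib]
  exact Finset.prod_le_prod (fun i _ => abs_nonneg _) fun i _ => abs_poissonZ_le hu (y i)

lemma summable_poissonZd {t : ℝ} (ht : 0 ≤ t) : Summable (poissonZd d t) :=
  summable_pi_prod_of_nonneg (fun _ => poissonZ_nonneg ht) fun _ => summable_poissonZ t

end PoissonZd

section PoissonSemigroup

variable {d : ℕ}

lemma PZ_eq_tsum (t : ℝ) (f : (Fin d → ℤ) → ℝ) (x : Fin d → ℤ) :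
    PZ d t f x = ∑' y : Fin d → ℤ, f (x + y) * poissonZd d t y := by
  have hinj : Function.Injective fun (y : Fin d → ℕ) (i : Fin d) => (y i : ℤ) :=
    fun y y' h => funext fun i => Int.ofNat_inj.1 (congrFun h i)
  refine Eq.trans ?_ (hinj.tsum_eq fun y hy => ?_)
  · simp [PZ, poissonD, poissonZd, poisson, poissonZ_natCast]
  · have hnonneg : ∀ i, 0 ≤ y i := by
      by_contra h
      simp only [not_forall, not_le] at h
      exact hy (by simp [poissonZd_eq_zero_of_neg t h])
    exact ⟨fun i => (y i).toNat, funext fun i => Int.toNat_of_nonneg (hnonneg i)⟩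

lemma summable_mul_poissonZd {φ : (Fin d → ℤ) → ℝ} {C : ℝ} (hφ : ∀ y, |φ y| ≤ C) (t : ℝ) :
    Summable fun y => φ y * poissonZd d t y := by
  refine Summable.of_norm_bounded
    (((summable_poissonZd (abs_nonneg t)).mul_left (Real.exp (2 * |t|) ^ d)).mul_left C)
    fun y => ?_
  rw [Real.norm_eq_abs, abs_mul]
  exact mul_le_mul (hφ y) (abs_poissonZd_le le_rfl y) (abs_nonneg _)
    ((abs_nonneg _).trans (hφ y))

lemma tsum_mul_poissonZd_sub_single (φ : (Fin d → ℤ) → ℝ) (t : ℝ) (i : Fin d) :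
    ∑' y, φ y * poissonZd d t (y - Pi.single i 1)
      = ∑' y, φ (y + Pi.single i 1) * poissonZd d t y := by
  rw [← (Equiv.addRight (Pi.single i 1 : Fin d → ℤ)).tsum_eq]
  simp only [Equiv.coe_addRight, add_sub_cancel_right]

lemma summable_mul_poissonZd_sub_single {φ : (Fin d → ℤ) → ℝ} {C : ℝ} (hφ : ∀ y, |φ y| ≤ C)
    (t : ℝ) (i : Fin d) : Summable fun y => φ y * poissonZd d t (y - Pi.single i 1) :=
  (Equiv.addRight (Pi.single i 1 : Fin d → ℤ)).summable_iff.1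
    (by simpa [Function.comp_def] using summable_mul_poissonZd (fun y => hφ (y + _)) t)

lemma hasDerivAt_tsum_mul_poissonZd {φ : (Fin d → ℤ) → ℝ} {C : ℝ} (hφ : ∀ y, |φ y| ≤ C)
    (t : ℝ) :
    HasDerivAt (fun u => ∑' y, φ y * poissonZd d u y)
      (∑ i, (∑' y, φ (y + Pi.single i 1) * poissonZd d t y
        - ∑' y, φ y * poissonZd d t y)) t := by
  set R := |t| + 1
  set M : (Fin d → ℤ) → ℝ := fun y => Real.exp (2 * R) ^ d * poissonZd d R y
  have hM : Summable M := (summable_poissonZd (by positivity)).mul_left _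
  have hbound : ∀ y, ∀ u ∈ Metric.ball (0 : ℝ) R,
      ‖φ y * ∑ i, (poissonZd d u (y - Pi.single i 1) - poissonZd d u y)‖
        ≤ C * ∑ i, (M (y - Pi.single i 1) + M y) := by
    intro y u hu
    have huR : |u| ≤ R := by simpa using (Metric.mem_ball.1 hu).le
    rw [Real.norm_eq_abs, abs_mul]
    refine mul_le_mul (hφ y) ((Finset.abs_sum_le_sum_abs _ _).trans
      (Finset.sum_le_sum fun i _ => (abs_sub _ _).trans
        (add_le_add (abs_poissonZd_le huR _) (abs_poissonZd_le huR _)))) (abs_nonneg _)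
      ((abs_nonneg _).trans (hφ y))
  have hderiv := hasDerivAt_tsum_of_isPreconnected
    ((summable_sum fun i _ => ((Equiv.subRight _).summable_iff.2 hM).add hM).mul_left C)
    Metric.isOpen_ball (convex_ball 0 R).isPreconnected
    (fun y u _ => (hasDerivAt_poissonZd y u).const_mul (φ y)) hbound
    (Metric.mem_ball_self (by positivity)) (summable_mul_poissonZd hφ 0)
    (show t ∈ Metric.ball (0 : ℝ) R by simp [R])
  refine hderiv.congr_deriv ?_
  simp_rw [Finset.mul_sum, mul_sub]
  rw [Summable.tsum_finsetSum fun i _ => (summable_mul_poissonZd_sub_single hφ t i).sub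
    (summable_mul_poissonZd hφ t)]
  refine Finset.sum_congr rfl fun i _ => ?_
  rw [Summable.tsum_sub (summable_mul_poissonZd_sub_single hφ t i) (summable_mul_poissonZd hφ t),
    tsum_mul_poissonZd_sub_single]

lemma hasDerivAt_PZ {f : (Fin d → ℤ) → ℝ} {C : ℝ} (hf : ∀ x, |f x| ≤ C) (x : Fin d → ℤ)
    (t : ℝ) :
    HasDerivAt (fun u => PZ d u f x) (∑ i, (PZ d t f (x + Pi.single i 1) - PZ d t f x)) t := by
  simp_rw [PZ_eq_tsum]
  convert hasDerivAt_tsum_mul_poissonZd (φ := fun y => f (x + y)) (fun y => hf _) t using 5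
  ac_rfl

lemma PZ_pos {f : (Fin d → ℤ) → ℝ} {C : ℝ} (hpos : ∀ x, 0 < f x) (hf : ∀ x, |f x| ≤ C)
    {t : ℝ} (ht : 0 ≤ t) (x : Fin d → ℤ) : 0 < PZ d t f x := by
  rw [PZ_eq_tsum]
  refine (summable_mul_poissonZd (fun y => hf (x + y)) t).tsum_pos
    (fun y => mul_nonneg (hpos _).le (poissonZd_nonneg ht y)) 0 ?_
  rw [poissonZd_zero_right]
  exact mul_pos (hpos _) (by positivity)

end PoissonSemigroup

lemma gFun_eq (d : ℕ) (T s : ℝ) (f : (Fin d → ℤ) → ℝ) (xs : Fin d → ℤ) (t : ℝ)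
    (x : Fin d → ℤ) :
    gFun d T s f xs t x = PZ d (T - t) f x / PZ d (T - s) f xs * poissonZd d (t - s) (x - xs) := by
  unfold gFun
  split_ifs with h
  · rw [one_mul]
  · simp only [not_forall, not_le] at h
    obtain ⟨i, hi⟩ := h
    rw [poissonZd_eq_zero_of_neg _ ⟨i, by simpa using hi⟩]
    ring

lemma hasDerivAt_PZ_const_sub {d : ℕ} {f : (Fin d → ℤ) → ℝ} {C : ℝ} (hf : ∀ x, |f x| ≤ C)
    (T : ℝ) (x : Fin d → ℤ) (t : ℝ) :
    HasDerivAt (fun u => PZ d (T - u) f x)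
      (∑ i, (PZ d (T - t) f x - PZ d (T - t) f (x + Pi.single i 1))) t := by
  simpa using (hasDerivAt_PZ hf x (T - t)).comp_const_sub T t

theorem forward_equation_general (d : ℕ) (T s : ℝ) (hsT : s ≤ T)
    (f : (Fin d → ℤ) → ℝ) (c C : ℝ) (hc : 0 < c) (hf : ∀ x, c ≤ f x ∧ f x ≤ C)
    (xs : Fin d → ℤ) :
    (∀ t : ℝ, s ≤ t → t ≤ T → ∀ x : Fin d → ℤ, (∀ i, 0 ≤ x i) →
      HasDerivAt (fun u => gFun d T s f xs u x)
        (∑ i, (PZ d (T - t) f x / PZ d (T - t) f (x - Pi.single i 1)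
            * gFun d T s f xs t (x - Pi.single i 1)
          - PZ d (T - t) f (x + Pi.single i 1) / PZ d (T - t) f x
            * gFun d T s f xs t x)) t)
    ∧ (∀ x : Fin d → ℤ, gFun d T s f xs s x = if x = xs then 1 else 0) := by
  have hfpos : ∀ x, 0 < f x := fun x => hc.trans_le (hf x).1
  have hfC : ∀ x, |f x| ≤ C := fun x => (abs_of_pos (hfpos x)).trans_le (hf x).2
  have hpos : ∀ {u}, u ≤ T → ∀ y, 0 < PZ d (T - u) f y := fun hu =>
    PZ_pos hfpos hfC (sub_nonneg.2 hu)
  refine ⟨fun t _ htT x _ => ?_, fun x => ?_⟩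
  · have hπ := (hasDerivAt_poissonZd (x - xs) (t - s)).comp_sub_const t s
    simp_rw [gFun_eq]
    refine (((hasDerivAt_PZ_const_sub hfC T x t).mul hπ).div_const _).congr_of_eventuallyEq
      (Filter.Eventually.of_forall fun u => div_mul_eq_mul_div _ _ _) |>.congr_deriv ?_
    have hx_pos := hpos htT x
    have hxs_pos := hpos hsT xs
    rw [Finset.sum_mul, Finset.mul_sum, ← Finset.sum_add_distrib, Finset.sum_div]
    refine Finset.sum_congr rfl fun i _ => ?_
    have hx_sub_pos := hpos htT (x - Pi.single i 1)
    rw [sub_right_comm x]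
    field_simp
    ring
  · rw [gFun_eq, sub_self, poissonZd_zero_left]
    by_cases hx : x = xs
    · simp [hx, (hpos hsT xs).ne']
    · simp [hx, sub_eq_zero]

/-- g solves the Kolmogorov forward equation of the Poisson–Föllmer process
    with initial condition g(s,·) = δ_{x_s}. -/
theorem forward_equation (d : ℕ) (T s : ℝ) (hs : 0 ≤ s) (hsT : s ≤ T)
    (f : (Fin d → ℤ) → ℝ) (c C : ℝ) (hc : 0 < c) (hf : ∀ x, c ≤ f x ∧ f x ≤ C)
    (xs : Fin d → ℤ) (hxs : ∀ i, 0 ≤ xs i) :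
    (∀ t : ℝ, s ≤ t → t ≤ T → ∀ x : Fin d → ℤ, (∀ i, 0 ≤ x i) →
      HasDerivAt (fun u => gFun d T s f xs u x)
        (∑ i, (PZ d (T - t) f x / PZ d (T - t) f (x - Pi.single i 1)
            * gFun d T s f xs t (x - Pi.single i 1)
          - PZ d (T - t) f (x + Pi.single i 1) / PZ d (T - t) f x
            * gFun d T s f xs t x)) t)
    ∧ (∀ x : Fin d → ℤ, gFun d T s f xs s x = if x = xs then 1 else 0) :=
  forward_equation_general d T s hsT f c C hc hf xs
end

section
/- Discrete Tweedie's formula: for the Poisson-Föllmer process with target μ = f·π_T, the intensity satisfies λⁱ(t,x) = (E[X_Tⁱ | X_t = x] − xⁱ)/(T−t) for each i and t ∈ [0,T), i.e., (T−t)·h(t,x+eᵢ)/h(t,x) = ∑_{y∈ℕ^d} f(x+y) yⁱ π_{T−t}(y) / P_{T−t}f(x). -/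
noncomputable def poissonSemigroup (d : ℕ) (t : ℝ) (G : (Fin d → ℕ) → ℝ)
    (x : Fin d → ℕ) : ℝ :=
  ∑' y : Fin d → ℕ, G (x + y) * poissonD d t y

/-!
The Poisson weights satisfy `(k + 1) π_s(k + 1) = s π_s(k)`, and in product form
`(zⁱ + 1) π_s(z + eᵢ) = s π_s(z)`. Substituting `y = z + eᵢ` in `∑_y f(x + y) yⁱ π_s(y)`
(terms with `yⁱ = 0` vanish) therefore turns it into `s ∑_z f(x + eᵢ + z) π_s(z) = s P_s f(x + eᵢ)`;
the formula follows after dividing by `P_s f(x)`. The substitution is injective and covers the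
support, so the identity of `tsum`s holds with no summability assumption.
-/

lemma succ_mul_poisson_succ (s : ℝ) (k : ℕ) :
    ((k : ℝ) + 1) * poisson s (k + 1) = s * poisson s k := by
  unfold poisson
  rw [Nat.factorial_succ, pow_succ]
  push_cast
  field_simp

lemma succ_mul_poissonD_add_single {d : ℕ} (s : ℝ) (z : Fin d → ℕ) (i : Fin d) :
    ((z i : ℝ) + 1) * poissonD d s (z + Pi.single i 1) = s * poissonD d s z := by
  have hrest : ∀ j ∈ Finset.univ.erase i,
      poisson s ((z + Pi.single i 1 : Fin d → ℕ) j) = poisson s (z j) :=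
    fun j hj ↦ by simp [Pi.single_eq_of_ne (Finset.ne_of_mem_erase hj)]
  unfold poissonD
  rw [← Finset.mul_prod_erase _ _ (Finset.mem_univ i),
    ← Finset.mul_prod_erase _ (fun j ↦ poisson s (z j)) (Finset.mem_univ i),
    Finset.prod_congr rfl hrest, ← mul_assoc, ← mul_assoc, Pi.add_apply, Pi.single_eq_same,
    succ_mul_poisson_succ]

lemma tsum_mul_coord_mul_poissonD {d : ℕ} (s : ℝ) (F : (Fin d → ℕ) → ℝ) (i : Fin d) :
    ∑' y, F y * (y i : ℝ) * poissonD d s y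
      = s * ∑' z, F (z + Pi.single i 1) * poissonD d s z := by
  have hsupp : Function.support (fun y ↦ F y * (y i : ℝ) * poissonD d s y)
      ⊆ Set.range (· + (Pi.single i 1 : Fin d → ℕ)) := by
    intro y hy
    have hyi : y i ≠ 0 := fun h ↦ hy (by simp [h])
    refine ⟨y - Pi.single i 1, tsub_add_cancel_of_le fun j ↦ ?_⟩
    rcases eq_or_ne j i with rfl | hj
    · simpa using Nat.one_le_iff_ne_zero.mpr hyi
    · simp [Pi.single_eq_of_ne hj]
  rw [← (add_left_injective (Pi.single i 1)).tsum_eq hsupp, ← tsum_mul_left]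
  congr 1 with z
  rw [mul_assoc, Pi.add_apply, Pi.single_eq_same, Nat.cast_succ,
    succ_mul_poissonD_add_single]
  ring

lemma mul_poissonSemigroup_add_single {d : ℕ} (s : ℝ) (G : (Fin d → ℕ) → ℝ)
    (x : Fin d → ℕ) (i : Fin d) :
    s * poissonSemigroup d s G (x + Pi.single i 1)
      = ∑' y, G (x + y) * (y i : ℝ) * poissonD d s y := by
  rw [tsum_mul_coord_mul_poissonD s (fun y ↦ G (x + y)), poissonSemigroup]
  simp only [add_right_comm x, ← add_assoc]

theorem discrete_tweedie_general (d : ℕ) (T : ℝ) (f : (Fin d → ℕ) → ℝ) (t : ℝ) (x : Fin d → ℕ)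
    (i : Fin d) :
    (T - t) * (poissonSemigroup d (T - t) f (x + Pi.single i 1)
        / poissonSemigroup d (T - t) f x)
      = (∑' y : Fin d → ℕ, f (x + y) * (y i : ℝ) * poissonD d (T - t) y)
          / poissonSemigroup d (T - t) f x := by
  rw [← mul_div_assoc, mul_poissonSemigroup_add_single]

/-- Discrete Tweedie's formula:
    (T-t)·h(t,x+eᵢ)/h(t,x) = ∑_y f(x+y) yⁱ π_{T-t}(y) / P_{T-t}f(x),
    i.e. λⁱ(t,x) = (E[X_Tⁱ | X_t = x] - xⁱ)/(T-t). -/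
theorem discrete_tweedie (d : ℕ) (T : ℝ) (hT : 0 < T)
    (f : (Fin d → ℕ) → ℝ) (c C : ℝ) (hc : 0 < c) (hf : ∀ x, c ≤ f x ∧ f x ≤ C)
    (t : ℝ) (ht0 : 0 ≤ t) (htT : t < T) (x : Fin d → ℕ) (i : Fin d) :
    (T - t) * (poissonSemigroup d (T - t) f (x + Pi.single i 1)
        / poissonSemigroup d (T - t) f x)
      = (∑' y : Fin d → ℕ, f (x + y) * (y i : ℝ) * poissonD d (T - t) y)
          / poissonSemigroup d (T - t) f x :=
  discrete_tweedie_general d T f t x i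
end

section
/- The time derivative of the product Binomial pmf satisfies ∂_t B_{x,t}(y) = ∑_{i=1}^d xⁱ [ B_{x−eᵢ,t}(y−eᵢ) − B_{x−eᵢ,t}(y) ] for t ∈ (0,1) and 0 ≤ y ≤ x in ℕ^d. -/
/-- Product Binomial pmf on ℤ^d, zero unless 0 ≤ y ≤ x. -/
noncomputable def Bpmf (d : ℕ) (x : Fin d → ℤ) (t : ℝ) (y : Fin d → ℤ) : ℝ :=
  if ∀ i, 0 ≤ y i ∧ y i ≤ x i then
    ∏ i, ((x i).toNat.choose ((y i).toNat) : ℝ) * t ^ (y i).toNat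
      * (1 - t) ^ ((x i).toNat - (y i).toNat)
  else 0

/-!
Each coordinate of `Bpmf` is a Bernstein polynomial `b_{n,k}(t)`, extended by zero off
`0 ≤ k ≤ n`, and `b_{n,k}' = n (b_{n-1,k-1} - b_{n-1,k})`. The product rule turns this into the stated sum,
since shifting `x` and `y` along `eᵢ` changes only the `i`-th factor.
-/

open Finset Polynomial

theorem Fintype.prod_eq_mul_prod_erase_of_forall_ne {ι M : Type*} [Fintype ι] [DecidableEq ι]
    [CommMonoid M] {f g : ι → M} (i : ι) (h : ∀ j ≠ i, f j = g j) :
    ∏ j, f j = f i * ∏ j ∈ univ.erase i, g j := by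
  rw [← mul_prod_erase _ _ (mem_univ i)]
  exact congrArg _ (Finset.prod_congr rfl fun j hj => h j (ne_of_mem_erase hj))

noncomputable def binomPmf (n k : ℤ) (t : ℝ) : ℝ :=
  if 0 ≤ k ∧ k ≤ n then (bernsteinPolynomial ℝ n.toNat k.toNat).eval t else 0

theorem binomPmf_natCast (n k : ℕ) (t : ℝ) :
    binomPmf n k t = (bernsteinPolynomial ℝ n k).eval t := by
  by_cases hkn : k ≤ n
  · simp [binomPmf, hkn]
  · simp [binomPmf, hkn, bernsteinPolynomial.eq_zero_of_lt ℝ (not_le.mp hkn)]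

theorem binomPmf_of_neg {n k : ℤ} (hk : k < 0) (t : ℝ) : binomPmf n k t = 0 :=
  if_neg fun h => hk.not_ge h.1

theorem Bpmf_eq_prod_binomPmf (d : ℕ) (x : Fin d → ℤ) (t : ℝ) (y : Fin d → ℤ) :
    Bpmf d x t y = ∏ i, binomPmf (x i) (y i) t := by
  unfold Bpmf
  split_ifs with h
  · exact prod_congr rfl fun i _ => by simp [binomPmf, h i, bernsteinPolynomial]
  · push Not at h
    obtain ⟨i, hi⟩ := h
    exact (prod_eq_zero (mem_univ i) (if_neg fun h' => (hi h'.1).not_ge h'.2)).symm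

theorem hasDerivAt_binomPmf {n k : ℤ} (hk : 0 ≤ k) (hkn : k ≤ n) (t : ℝ) :
    HasDerivAt (binomPmf n k) (n * (binomPmf (n - 1) (k - 1) t - binomPmf (n - 1) k t)) t := by
  lift n to ℕ using hk.trans hkn
  lift k to ℕ using hk
  rw [funext (binomPmf_natCast n k)]
  refine (Polynomial.hasDerivAt _ t).congr_deriv ?_
  rcases n with _ | m
  · obtain rfl : k = 0 := by omega
    simp [bernsteinPolynomial]
  · rcases k with _ | j
    · simp [binomPmf_of_neg, bernsteinPolynomial.derivative_zero, ← binomPmf_natCast]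
      ring
    · simp [bernsteinPolynomial.derivative_succ, ← binomPmf_natCast]

theorem binomial_time_derivative_general (d : ℕ) (x y : Fin d → ℤ)
    (hy : ∀ i, 0 ≤ y i) (hyx : ∀ i, y i ≤ x i)
    (t : ℝ) :
    HasDerivAt (fun u => Bpmf d x u y)
      (∑ i, (x i : ℝ) * (Bpmf d (x - Pi.single i 1) t (y - Pi.single i 1)
        - Bpmf d (x - Pi.single i 1) t y)) t := by
  simp only [Bpmf_eq_prod_binomPmf]
  refine (HasDerivAt.fun_finsetProd fun i _ => hasDerivAt_binomPmf (hy i) (hyx i) t).congr_deriv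
    (Finset.sum_congr rfl fun i _ => ?_)
  have shift_apply_of_ne {z : Fin d → ℤ} {j : Fin d} (hj : j ≠ i) :
      (z - Pi.single i 1 : Fin d → ℤ) j = z j := by
    simp [Pi.single_eq_of_ne hj]
  rw [Fintype.prod_eq_mul_prod_erase_of_forall_ne i
      fun j hj => by rw [shift_apply_of_ne hj, shift_apply_of_ne hj],
    Fintype.prod_eq_mul_prod_erase_of_forall_ne i fun j hj => by rw [shift_apply_of_ne hj]]
  simp only [Pi.sub_apply, Pi.single_eq_same, smul_eq_mul]
  ring

/-- Time derivative of the Binomial pmf: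
    ∂_t B_{x,t}(y) = ∑ᵢ xⁱ [B_{x-eᵢ,t}(y-eᵢ) - B_{x-eᵢ,t}(y)]. -/
theorem binomial_time_derivative (d : ℕ) (x y : Fin d → ℤ)
    (hy : ∀ i, 0 ≤ y i) (hyx : ∀ i, y i ≤ x i)
    (t : ℝ) (ht0 : 0 < t) (ht1 : t < 1) :
    HasDerivAt (fun u => Bpmf d x u y)
      (∑ i, (x i : ℝ) * (Bpmf d (x - Pi.single i 1) t (y - Pi.single i 1)
        - Bpmf d (x - Pi.single i 1) t y)) t :=
  binomial_time_derivative_general d x y hy hyx t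
end

section
/- Optimal affine baseline for Binomial thinning: with X₁ as above (mean μ_d, variance σ_d², μ_d > 0) and X_t | X₁ ∼ Binomial(X₁, t), the minimizer over (b_skip, b_out) of E[(X₁ − b_skip X_t − b_out μ_d)²] is b_skip(t) = σ_d² / (μ_d(1−t) + σ_d² t) and b_out(t) = 1 − t·b_skip(t). -/
/-! Conditionally on `X₁ = n`, `X_t` has mean `n t` and variance `n t (1 - t)`, so the residual
`X₁ - a X_t - c` has conditional second moment `((1 - a t) n - c)² + a² t (1 - t) n`. Averaging
over `X₁` gives the risk of `(a, b)` in closed form,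
`(1 - a t)² σ² + ((1 - a t) μ - b μ)² + a² t (1 - t) μ`, and completing the square with
`D = μ (1 - t) + σ² t > 0` and `A = σ² / D` shows that it exceeds its value at `(A, 1 - t A)` by
`t D (a - A)² + μ² (1 - a t - b)²`. -/

open MeasureTheory

noncomputable def binomPMF (n : ℕ) (t : ℝ) (k : ℕ) : ℝ :=
  (n.choose k : ℝ) * t ^ k * (1 - t) ^ (n - k)

namespace binomPMF

open Finset Polynomial

lemma eq_eval_bernsteinPolynomial (n k : ℕ) (t : ℝ) :
    binomPMF n t k = (bernsteinPolynomial ℝ n k).eval t := by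
  simp [binomPMF, bernsteinPolynomial, mul_comm]

lemma eq_zero_of_lt {n k : ℕ} (h : n < k) (t : ℝ) : binomPMF n t k = 0 := by
  simp [binomPMF, Nat.choose_eq_zero_of_lt h]

lemma nonneg (n k : ℕ) {t : ℝ} (ht0 : 0 ≤ t) (ht1 : t ≤ 1) : 0 ≤ binomPMF n t k := by
  have : 0 ≤ 1 - t := sub_nonneg.2 ht1
  unfold binomPMF
  positivity

lemma sum_eq_one (n : ℕ) (t : ℝ) : ∑ k ∈ range (n + 1), binomPMF n t k = 1 := by
  simpa [eq_eval_bernsteinPolynomial, eval_finsetSum] using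
    congrArg (eval t) (bernsteinPolynomial.sum ℝ n)

lemma sum_mul_natCast (n : ℕ) (t : ℝ) : ∑ k ∈ range (n + 1), binomPMF n t k * k = n * t := by
  simpa [eq_eval_bernsteinPolynomial, eval_finsetSum, nsmul_eq_mul, mul_comm] using
    congrArg (eval t) (bernsteinPolynomial.sum_smul ℝ n)

lemma sum_mul_sub_sq (n : ℕ) (t : ℝ) :
    ∑ k ∈ range (n + 1), binomPMF n t k * (n * t - k) ^ 2 = n * t * (1 - t) := by
  simpa [eq_eval_bernsteinPolynomial, eval_finsetSum, nsmul_eq_mul, mul_comm] using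
    congrArg (eval t) (bernsteinPolynomial.variance ℝ n)

lemma sum_mul_residual_sq (n : ℕ) (t a c : ℝ) :
    ∑ k ∈ range (n + 1), binomPMF n t k * ((n : ℝ) - a * k - c) ^ 2
      = ((1 - a * t) * n - c) ^ 2 + a ^ 2 * t * (1 - t) * n := by
  have h (k : ℕ) : binomPMF n t k * ((n : ℝ) - a * k - c) ^ 2
      = ((1 - a * t) * n - c) ^ 2 * binomPMF n t k
        + 2 * a * ((1 - a * t) * n - c) * (n * t * binomPMF n t k - binomPMF n t k * k)
        + a ^ 2 * (binomPMF n t k * (n * t - k) ^ 2) := by ring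
  simp only [h, sum_add_distrib, ← mul_sum, sum_sub_distrib, sum_eq_one, sum_mul_natCast,
    sum_mul_sub_sq]
  ring

end binomPMF

open Finset

section Thinning

variable {Ω : Type*} [MeasurableSpace Ω] {P : Measure Ω}

lemma lintegral_comp_eq_tsum {α : Type*} [MeasurableSpace α] [Countable α]
    [MeasurableSingletonClass α] {X : Ω → α} (hX : Measurable X) (f : α → ENNReal) :
    ∫⁻ ω, f (X ω) ∂P = ∑' a, f a * P {ω | X ω = a} := by
  rw [← lintegral_map (measurable_of_countable f) hX, lintegral_countable']
  congr! with a
  rw [Measure.map_apply hX (measurableSet_singleton a)]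
  rfl

variable [IsFiniteMeasure P] {X Y : Ω → ℕ} {t : ℝ}

-- Working in `ℝ≥0∞` first makes the exchange of the sums over the values of `X` and `Y` unconditional.
lemma lintegral_binomial_thinning (hX : Measurable X) (hY : Measurable Y) (ht0 : 0 ≤ t)
    (ht1 : t ≤ 1)
    (hcond : ∀ n k : ℕ,
      (P {ω | Y ω = k ∧ X ω = n}).toReal = binomPMF n t k * (P {ω | X ω = n}).toReal)
    (g : ℕ → ℕ → ENNReal) :
    ∫⁻ ω, g (X ω) (Y ω) ∂P
      = ∫⁻ ω, ∑ k ∈ range (X ω + 1), ENNReal.ofReal (binomPMF (X ω) t k) * g (X ω) k ∂P := by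
  have hjoint (n k : ℕ) :
      P {ω | Y ω = k ∧ X ω = n} = ENNReal.ofReal (binomPMF n t k) * P {ω | X ω = n} := by
    rw [← ENNReal.ofReal_toReal (measure_ne_top P _), hcond,
      ENNReal.ofReal_mul (binomPMF.nonneg n k ht0 ht1), ENNReal.ofReal_toReal (measure_ne_top P _)]
  have hfiber (n : ℕ) :
      ∑' k, g n k * P {ω | Y ω = k ∧ X ω = n}
        = (∑ k ∈ range (n + 1), ENNReal.ofReal (binomPMF n t k) * g n k) * P {ω | X ω = n} := by
    rw [sum_mul, tsum_eq_sum (s := range (n + 1))]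
    · exact sum_congr rfl fun k _ => by rw [hjoint]; ring
    · intro k hk
      rw [hjoint, binomPMF.eq_zero_of_lt (by simpa using hk), ENNReal.ofReal_zero]
      simp
  calc ∫⁻ ω, g (X ω) (Y ω) ∂P
        = ∑' p : ℕ × ℕ, g p.1 p.2 * P {ω | Y ω = p.2 ∧ X ω = p.1} := by
        rw [lintegral_comp_eq_tsum (hX.prodMk hY) fun p => g p.1 p.2]
        simp only [Prod.ext_iff, and_comm]
    _ = ∑' n, ∑' k, g n k * P {ω | Y ω = k ∧ X ω = n} :=
        ENNReal.tsum_prod (f := fun n k => g n k * P {ω | Y ω = k ∧ X ω = n})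
    _ = _ := by simp only [hfiber]; exact (lintegral_comp_eq_tsum hX _).symm

lemma integral_binomial_thinning (hX : Measurable X) (hY : Measurable Y) (ht0 : 0 ≤ t)
    (ht1 : t ≤ 1)
    (hcond : ∀ n k : ℕ,
      (P {ω | Y ω = k ∧ X ω = n}).toReal = binomPMF n t k * (P {ω | X ω = n}).toReal)
    {g : ℕ → ℕ → ℝ} (hg : ∀ n k, 0 ≤ g n k) :
    ∫ ω, g (X ω) (Y ω) ∂P
      = ∫ ω, ∑ k ∈ range (X ω + 1), binomPMF (X ω) t k * g (X ω) k ∂P := by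
  have hmeas {f : ℕ → ℕ → ℝ} : AEStronglyMeasurable (fun ω => f (X ω) (Y ω)) P :=
    ((measurable_of_countable fun p : ℕ × ℕ => f p.1 p.2).comp
      (hX.prodMk hY)).aestronglyMeasurable
  have hterm_nonneg (n k : ℕ) : 0 ≤ binomPMF n t k * g n k :=
    mul_nonneg (binomPMF.nonneg n k ht0 ht1) (hg n k)
  rw [integral_eq_lintegral_of_nonneg_ae (.of_forall fun _ => hg _ _) hmeas,
    integral_eq_lintegral_of_nonneg_ae
      (.of_forall fun _ => sum_nonneg fun k _ => hterm_nonneg _ k)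
      (hmeas (f := fun n _ => ∑ k ∈ range (n + 1), binomPMF n t k * g n k)),
    lintegral_binomial_thinning hX hY ht0 ht1 hcond fun n k => ENNReal.ofReal (g n k)]
  congr! 3 with ω
  rw [ENNReal.ofReal_sum_of_nonneg fun k _ => hterm_nonneg _ k]
  exact sum_congr rfl fun k _ => (ENNReal.ofReal_mul (binomPMF.nonneg _ k ht0 ht1)).symm

end Thinning

open ProbabilityTheory in
lemma integral_affine_sq {Ω : Type*} [MeasurableSpace Ω] {P : Measure Ω}
    [IsProbabilityMeasure P] {X : Ω → ℝ} (hX : MemLp X 2 P) {m s : ℝ} (hm : ∫ ω, X ω ∂P = m)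
    (hs : ∫ ω, (X ω - m) ^ 2 ∂P = s) (α β : ℝ) :
    ∫ ω, (α * X ω - β) ^ 2 ∂P = α ^ 2 * s + (α * m - β) ^ 2 := by
  have hmean : P[fun ω => α * X ω - β] = α * m - β := by
    rw [integral_sub ((hX.integrable one_le_two).const_mul α) (integrable_const β),
      integral_const_mul, integral_const, probReal_univ, one_smul, hm]
  have hvar : Var[fun ω => α * X ω - β; P] = α ^ 2 * s := by
    rw [variance_sub_const (hX.const_mul α).aestronglyMeasurable, variance_const_mul,
      variance_eq_integral hX.aemeasurable, hm, hs]
  have hY : MemLp (fun ω => α * X ω - β) 2 P := (hX.const_mul α).sub (memLp_const β)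
  have hsub := variance_eq_sub hY
  rw [hvar, hmean] at hsub
  simp only [Pi.pow_apply] at hsub
  linarith

def thinningRisk (μ σ2 t a b : ℝ) : ℝ :=
  (1 - a * t) ^ 2 * σ2 + ((1 - a * t) * μ - b * μ) ^ 2 + a ^ 2 * t * (1 - t) * μ

lemma thinningRisk_optimal_le {μ σ2 t : ℝ} (hμ : 0 < μ) (hσ : 0 ≤ σ2) (ht0 : 0 ≤ t)
    (ht1 : t < 1) (a b : ℝ) :
    thinningRisk μ σ2 t (σ2 / (μ * (1 - t) + σ2 * t)) (1 - t * (σ2 / (μ * (1 - t) + σ2 * t)))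
      ≤ thinningRisk μ σ2 t a b := by
  set D := μ * (1 - t) + σ2 * t
  set A := σ2 / D
  have hD : 0 < D := by nlinarith [mul_nonneg hσ ht0]
  have hA : A * D = σ2 := div_mul_cancel₀ σ2 hD.ne'
  have hgap : thinningRisk μ σ2 t a b
      = thinningRisk μ σ2 t A (1 - t * A) + t * D * (a - A) ^ 2 + (μ * (1 - a * t - b)) ^ 2 := by
    unfold thinningRisk
    linear_combination 2 * t * (a - A) * hA
  rw [hgap]
  have : 0 ≤ t * D * (a - A) ^ 2 := by positivity
  nlinarith [sq_nonneg (μ * (1 - a * t - b))]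

/-- Optimal affine baseline for Binomial thinning: the minimizer of
    E[(X₁ - b_skip X_t - b_out μ_d)²] is
    b_skip = σ_d²/(μ_d(1-t) + σ_d² t), b_out = 1 - t·b_skip. -/
theorem optimal_affine_baseline
    {Ω : Type*} [MeasurableSpace Ω] (ℙ : Measure Ω) [IsProbabilityMeasure ℙ]
    (X1 Xt : Ω → ℕ) (hX1 : Measurable X1) (hXt : Measurable Xt)
    (hint : Integrable (fun ω => ((X1 ω : ℝ)) ^ 2) ℙ)
    (t : ℝ) (ht0 : 0 ≤ t) (ht1 : t < 1)
    (hcond : ∀ n k : ℕ,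
      (ℙ {ω | Xt ω = k ∧ X1 ω = n}).toReal
        = binomPMF n t k * (ℙ {ω | X1 ω = n}).toReal)
    (μd σd2 : ℝ) (hμpos : 0 < μd)
    (hμ : ∫ ω, (X1 ω : ℝ) ∂ℙ = μd)
    (hσ : ∫ ω, ((X1 ω : ℝ) - μd) ^ 2 ∂ℙ = σd2) :
    ∀ a b : ℝ,
      ∫ ω, ((X1 ω : ℝ)
          - (σd2 / (μd * (1 - t) + σd2 * t)) * (Xt ω : ℝ)
          - (1 - t * (σd2 / (μd * (1 - t) + σd2 * t))) * μd) ^ 2 ∂ℙ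
        ≤ ∫ ω, ((X1 ω : ℝ) - a * (Xt ω : ℝ) - b * μd) ^ 2 ∂ℙ := by
  have hL2 : MemLp (fun ω => (X1 ω : ℝ)) 2 ℙ :=
    (memLp_two_iff_integrable_sq (by fun_prop)).2 hint
  have hrisk (a b : ℝ) :
      ∫ ω, ((X1 ω : ℝ) - a * (Xt ω : ℝ) - b * μd) ^ 2 ∂ℙ = thinningRisk μd σd2 t a b := by
    rw [integral_binomial_thinning hX1 hXt ht0 ht1.le hcond
      (g := fun n k => ((n : ℝ) - a * k - b * μd) ^ 2) fun _ _ => sq_nonneg _]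
    simp only [binomPMF.sum_mul_residual_sq]
    have hsq : Integrable (fun ω => ((1 - a * t) * (X1 ω : ℝ) - b * μd) ^ 2) ℙ :=
      ((hL2.const_mul _).sub (memLp_const _)).integrable_sq
    rw [integral_add hsq ((hL2.integrable one_le_two).const_mul _),
      integral_affine_sq hL2 hμ hσ, integral_const_mul, hμ, thinningRisk]
  intro a b
  rw [hrisk, hrisk]
  exact thinningRisk_optimal_le hμpos (hσ ▸ integral_nonneg fun _ => sq_nonneg _) ht0 ht1 a b
end
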